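/- arXiv:1608.01722 — 2 statements merged into one kernel-verified Lean document; each statement's English description precedes it below -/
import Mathlib

section
/- Order ℕ^r lexicographically, totally order Σ (the disjoint union of two copies of ℕ^r) by declaring every element of the first copy larger than every element of the second copy and using the lexicographic order within each copy, and order words in Σ⋆ of equal length lexicographically. Define a total order on Hom_{𝒱_r}((d,m),(e,n)) by α < α′ iff w(α) < w(α′). Then for every morphism β : (e,n) → (f,p) in 𝒱_r and all α, α′ : (d,m) → (e,n), α < α′ implies β ∘ α < β ∘ α′. -/
open scoped Classical

/-- A morphism `(d,m) → (e,n)` in the Veronese category `𝒱_r`.  Here `M(e)` is realized as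
the set of functions `Fin r → ℕ` with coordinate sum `e`. -/
structure VMor (r d m e n : ℕ) where
  hde : d ≤ e
  α₁ : Fin m → Fin n
  mono : StrictMono α₁
  α₂ : ∀ i : Fin n, i ∉ Set.range α₁ → Fin r → ℕ
  hα₂ : ∀ i hi, ∑ t, α₂ i hi t = e
  α₃ : Fin m → Fin r → ℕ
  hα₃ : ∀ i, ∑ t, α₃ i t = e - d

namespace VMor

variable {r d m e n f p : ℕ}

/-- Composition in the Veronese category. -/
noncomputable def comp (β : VMor r e n f p) (α : VMor r d m e n) : VMor r d m f p where
  hde := α.hde.trans β.hde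
  α₁ := β.α₁ ∘ α.α₁
  mono := β.mono.comp α.mono
  α₂ := fun i hi =>
    if h : ∃ i', β.α₁ i' = i then
      α.α₂ h.choose
          (fun hc => hi ⟨hc.choose, by
            rw [Function.comp_apply, hc.choose_spec, h.choose_spec]⟩)
        + β.α₃ h.choose
    else β.α₂ i fun hmem => h hmem
  hα₂ := fun i hi => by
    split
    · rename_i h
      simp only [Pi.add_apply]
      rw [Finset.sum_add_distrib, α.hα₂, β.hα₃]
      have h1 := α.hde
      have h2 := β.hde
      omega
    · exact β.hα₂ _ _
  α₃ := fun i => α.α₃ i + β.α₃ (α.α₁ i)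
  hα₃ := fun i => by
    simp only [Pi.add_apply]
    rw [Finset.sum_add_distrib, α.hα₃, β.hα₃]
    have h1 := α.hde
    have h2 := β.hde
    omega

/-- The identity morphism `(d,m) → (d,m)`, given by the identity injection and zero
vectors for `α₃`. -/
def id (r d m : ℕ) : VMor r d m d m where
  hde := le_refl d
  α₁ := _root_.id
  mono := strictMono_id
  α₂ := fun i hi => absurd ⟨i, rfl⟩ hi
  hα₂ := fun i hi => absurd ⟨i, rfl⟩ hi
  α₃ := fun _ _ => 0
  hα₃ := fun _ => by simp

end VMor

/-- The alphabet `Σ`: a disjoint union of two copies of `ℕ^r`.  The first copy (`Sum.inl`)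
receives the values of `α₂`, the second copy (`Sum.inr`) the values of `α₃`. -/
abbrev VSigma (r : ℕ) : Type := (Fin r → ℕ) ⊕ (Fin r → ℕ)

/-- The word `w(α) ∈ Σ⋆` associated to a morphism `α : (d,m) → (e,n)`: a word of length
`n` whose `i`-th letter is `α₃(j)` in the second copy if `i = α₁(j)`, and `α₂(i)` in the
first copy if `i ∉ α₁([m])`. -/
noncomputable def VMor.word {r d m e n : ℕ} (α : VMor r d m e n) : List (VSigma r) :=
  List.ofFn fun i : Fin n =>
    if h : ∃ j, α.α₁ j = i then Sum.inr (α.α₃ h.choose)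
    else Sum.inl (α.α₂ i fun hmem => h hmem)

/-- The lexicographic (strict) order on `ℕ^r`. -/
def lexLT {r : ℕ} (x y : Fin r → ℕ) : Prop :=
  ∃ i, (∀ j, j < i → x j = y j) ∧ x i < y i

/-- The strict total order on the alphabet `Σ`: every element of the first copy of `ℕ^r`
is larger than every element of the second copy, and within each copy we use the
lexicographic order. -/
def VSigma.lt {r : ℕ} : VSigma r → VSigma r → Prop
  | Sum.inl a, Sum.inl b => lexLT a b
  | Sum.inl _, Sum.inr _ => False
  | Sum.inr _, Sum.inl _ => True
  | Sum.inr a, Sum.inr b => lexLT a b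


section Aux

variable {r d m e n f p : ℕ}

/-- The letter function of a morphism: `α.word = List.ofFn (letter α)`. -/
noncomputable def VMor.letter (α : VMor r d m e n) (i : Fin n) : VSigma r :=
  if h : ∃ j, α.α₁ j = i then Sum.inr (α.α₃ h.choose)
  else Sum.inl (α.α₂ i fun hmem => h hmem)

lemma VMor.word_eq (α : VMor r d m e n) : α.word = List.ofFn α.letter := rfl

lemma VMor.letter_eq_inr (α : VMor r d m e n) {j : Fin m} {i : Fin n}
    (hj : α.α₁ j = i) : α.letter i = Sum.inr (α.α₃ j) := by
  have h : ∃ j, α.α₁ j = i := ⟨j, hj⟩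
  have hc : h.choose = j := α.mono.injective (h.choose_spec.trans hj.symm)
  simp only [VMor.letter, dif_pos h, hc]

lemma VMor.letter_eq_inl (α : VMor r d m e n) {i : Fin n}
    (hi : i ∉ Set.range α.α₁) : α.letter i = Sum.inl (α.α₂ i hi) := by
  have h : ¬ ∃ j, α.α₁ j = i := fun ⟨j, hj⟩ => hi ⟨j, hj⟩
  simp only [VMor.letter, dif_neg h]

/-- Adding a fixed vector inside either component of `Σ`. -/
def addS (v : Fin r → ℕ) : VSigma r → VSigma r :=
  Sum.map (· + v) (· + v)

lemma lexLT_add {v x y : Fin r → ℕ} (h : lexLT x y) : lexLT (x + v) (y + v) := by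
  obtain ⟨i, hp, hl⟩ := h
  exact ⟨i, fun j hj => by simp [Pi.add_apply, hp j hj],
    by simpa [Pi.add_apply] using Nat.add_lt_add_right hl (v i)⟩

lemma addS_lt {v : Fin r → ℕ} {x y : VSigma r} (h : VSigma.lt x y) :
    VSigma.lt (addS v x) (addS v y) := by
  cases x with
  | inl a => cases y with
    | inl b => exact lexLT_add h
    | inr b => exact h.elim
  | inr a => cases y with
    | inl b => trivial
    | inr b => exact lexLT_add h

lemma comp_letter (β : VMor r e n f p) (α : VMor r d m e n) (i : Fin n) :
    (β.comp α).letter (β.α₁ i) = addS (β.α₃ i) (α.letter i) := by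
  by_cases h : ∃ j, α.α₁ j = i
  · obtain ⟨j, hj⟩ := h
    have h1 : (β.comp α).α₁ j = β.α₁ i := by
      simp [VMor.comp, Function.comp_apply, hj]
    rw [VMor.letter_eq_inr _ h1, VMor.letter_eq_inr α hj]
    show Sum.inr ((β.comp α).α₃ j) = _
    simp [VMor.comp, addS, hj]
  · have hi : i ∉ Set.range α.α₁ := fun ⟨j, hj⟩ => h ⟨j, hj⟩
    have h2 : β.α₁ i ∉ Set.range (β.comp α).α₁ := by
      rintro ⟨j, hj⟩
      exact h ⟨j, β.mono.injective hj⟩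
    rw [VMor.letter_eq_inl _ h2, VMor.letter_eq_inl α hi]
    show Sum.inl ((β.comp α).α₂ (β.α₁ i) h2) = _
    have hex : ∃ i', β.α₁ i' = β.α₁ i := ⟨i, rfl⟩
    have key : ∀ (j : Fin n) (hj : j ∉ Set.range α.α₁), j = i →
        α.α₂ j hj + β.α₃ j = α.α₂ i hi + β.α₃ i := by
      rintro j hj rfl; rfl
    simp only [VMor.comp, dif_pos hex, addS, Sum.map_inl]
    exact congrArg Sum.inl (key _ _ (β.mono.injective hex.choose_spec))

lemma comp_letter_not (β : VMor r e n f p) (α α' : VMor r d m e n) {k : Fin p}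
    (hk : k ∉ Set.range β.α₁) :
    (β.comp α).letter k = (β.comp α').letter k := by
  have h1 : k ∉ Set.range (β.comp α).α₁ := by
    rintro ⟨j, hj⟩; exact hk ⟨α.α₁ j, hj⟩
  have h1' : k ∉ Set.range (β.comp α').α₁ := by
    rintro ⟨j, hj⟩; exact hk ⟨α'.α₁ j, hj⟩
  have hne : ¬ ∃ i', β.α₁ i' = k := fun ⟨i', hi'⟩ => hk ⟨i', hi'⟩
  rw [VMor.letter_eq_inl _ h1, VMor.letter_eq_inl _ h1']
  show Sum.inl ((β.comp α).α₂ k h1) = Sum.inl ((β.comp α').α₂ k h1')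
  simp only [VMor.comp, dif_neg hne]

lemma lex_cons_inv {X : Type*} {R : X → X → Prop} {a b : X} {l l' : List X}
    (h : List.Lex R (a :: l) (b :: l')) :
    R a b ∨ (a = b ∧ List.Lex R l l') := by
  cases h with
  | cons h' => exact Or.inr ⟨rfl, h'⟩
  | rel h' => exact Or.inl h'

lemma lex_ofFn_iff {X : Type*} {R : X → X → Prop} :
    ∀ {n : ℕ} (fn gn : Fin n → X),
    List.Lex R (List.ofFn fn) (List.ofFn gn) ↔
      ∃ i, (∀ j, j < i → fn j = gn j) ∧ R (fn i) (gn i) := by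
  intro n
  induction n with
  | zero =>
    intro fn gn
    simp only [List.ofFn_zero]
    constructor
    · intro h; exact absurd h (by intro h; cases h)
    · rintro ⟨i, -, -⟩; exact absurd i.2 (Nat.not_lt_zero _)
  | succ n ih =>
    intro fn gn
    rw [List.ofFn_succ, List.ofFn_succ]
    constructor
    · intro h
      rcases lex_cons_inv h with h' | ⟨heq, h'⟩
      · exact ⟨0, fun j hj => absurd hj (by simp), h'⟩
      · obtain ⟨i, hp, hR⟩ := (ih _ _).mp h'
        refine ⟨i.succ, ?_, hR⟩
        intro j hj
        induction j using Fin.cases with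
        | zero => exact heq
        | succ j' => exact hp j' (by simpa [Fin.succ_lt_succ_iff] using hj)
    · rintro ⟨i, hp, hR⟩
      induction i using Fin.cases with
      | zero => exact List.Lex.rel hR
      | succ i' =>
        have h0 : fn 0 = gn 0 := hp 0 (Fin.succ_pos i')
        rw [h0]
        exact List.Lex.cons ((ih _ _).mpr
          ⟨i', fun j hj => hp j.succ (Fin.succ_lt_succ_iff.mpr hj), hR⟩)

end Aux

/-- Ordering morphisms `(d,m) → (e,n)` by the lexicographic order on
their words (words of equal length, over the totally ordered alphabet `Σ`), composition
with a fixed morphism `β : (e,n) → (f,p)` is strictly order-preserving: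
`α < α'` implies `β ∘ α < β ∘ α'`. -/
theorem comp_strictMono_in_word_order (r d m e n f p : ℕ)
    (β : VMor r e n f p) (α α' : VMor r d m e n)
    (h : List.Lex VSigma.lt α.word α'.word) :
    List.Lex VSigma.lt (β.comp α).word (β.comp α').word := by
  rw [VMor.word_eq, VMor.word_eq] at h ⊢
  obtain ⟨i, hpre, hlt⟩ := (lex_ofFn_iff _ _).mp h
  refine (lex_ofFn_iff _ _).mpr ⟨β.α₁ i, ?_, ?_⟩
  · intro k hk
    by_cases hkr : k ∈ Set.range β.α₁
    · obtain ⟨j, rfl⟩ := hkr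
      have hj : j < i := β.mono.lt_iff_lt.mp hk
      rw [comp_letter, comp_letter, hpre j hj]
    · exact comp_letter_not β α α' hkr
  · rw [comp_letter, comp_letter]
    exact addS_lt hlt
end

section
/- The Σ_n-invariant subspaces are closed under composition in the k-linearized Veronese category: if a ∈ k[Hom_{𝒱_r}((d,m),(e,n))] satisfies τ(a) = a for all τ ∈ Σ_n and b ∈ k[Hom_{𝒱_r}((e,n),(f,p))] satisfies σ(b) = b for all σ ∈ Σ_p, then the composite b ∘ a ∈ k[Hom_{𝒱_r}((d,m),(f,p))] satisfies σ(b ∘ a) = b ∘ a for all σ ∈ Σ_p. Hence taking Hom_{k𝒱_r^Σ}((d,m),(e,n)) = k[Hom_{𝒱_r}((d,m),(e,n))]^{Σ_n} defines a k-linear subcategory k𝒱_r^Σ of k𝒱_r. -/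
open scoped Classical

namespace VMor

variable {r d m e n : ℕ}

/-- The action of `σ ∈ Σ_n` on morphisms `(d,m) → (e,n)`.  With `τ` the permutation
induced by `σ` with respect to `α₁` (the unique `τ` with `σ ∘ α₁ ∘ τ⁻¹` order-preserving;
here `τ⁻¹ = Tuple.sort (σ ∘ α₁)`), we set `σ(α)₁ = σ ∘ α₁ ∘ τ⁻¹`, `σ(α)₂ = α₂ ∘ σ⁻¹` and
`σ(α)₃ = α₃ ∘ τ⁻¹`. -/
noncomputable def permAct (σ : Equiv.Perm (Fin n)) (α : VMor r d m e n) :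
    VMor r d m e n where
  hde := α.hde
  α₁ := (⇑σ ∘ α.α₁) ∘ ⇑(Tuple.sort (⇑σ ∘ α.α₁))
  mono := by
    refine Monotone.strictMono_of_injective ?_ ?_
    · exact Tuple.monotone_sort (⇑σ ∘ α.α₁)
    · exact ((σ.injective.comp α.mono.injective).comp (Tuple.sort (⇑σ ∘ α.α₁)).injective)
  α₂ := fun i hi =>
    α.α₂ (σ⁻¹ i) (fun hc =>
      hi ⟨(Tuple.sort (⇑σ ∘ α.α₁))⁻¹ hc.choose, by
        simp only [Function.comp_apply, Equiv.Perm.coe_inv, Equiv.apply_symm_apply, hc.choose_spec]⟩)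
  hα₂ := fun i hi => α.hα₂ _ _
  α₃ := fun i => α.α₃ (Tuple.sort (⇑σ ∘ α.α₁) i)
  hα₃ := fun i => α.hα₃ _

end VMor

variable (k : Type) [CommRing k]

/-- The `k`-bilinear composition on the hom spaces of the `k`-linearization `k𝒱_r`
(free `k`-modules on the morphism sets, realized as finitely supported functions). -/
noncomputable def lincomp {r d m e n f p : ℕ}
    (b : VMor r e n f p →₀ k) (a : VMor r d m e n →₀ k) : VMor r d m f p →₀ k :=
  b.sum fun β cb => a.sum fun α ca => Finsupp.single (β.comp α) (cb * ca)

/-- The `k`-linear extension of the `Σ_n`-action on morphisms to the free `k`-module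
`k[Hom_{𝒱_r}((d,m),(e,n))]`. -/
noncomputable def pAct {r d m e n : ℕ} (σ : Equiv.Perm (Fin n))
    (a : VMor r d m e n →₀ k) : VMor r d m e n →₀ k :=
  Finsupp.mapDomain (VMor.permAct σ) a

theorem Equiv.Perm.apply_inv_self {α : Type*} (f : Equiv.Perm α) (x : α) : f (f⁻¹ x) = x :=
  f.apply_symm_apply x

namespace VMor

lemma sort_unique {m p : ℕ} {g : Fin m → Fin p} (hg : Function.Injective g)
    {s : Equiv.Perm (Fin m)} (hs : Monotone (g ∘ s)) : s = Tuple.sort g := by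
  rw [Tuple.eq_sort_iff]
  exact ⟨hs, fun i j hij hgij => absurd (s.injective (hg hgij)) hij.ne⟩

lemma ext' {r d m e n : ℕ} {α β : VMor r d m e n} (h1 : α.α₁ = β.α₁)
    (h2 : ∀ i hi hi', α.α₂ i hi = β.α₂ i hi') (h3 : α.α₃ = β.α₃) : α = β := by
  cases α; cases β
  dsimp at h1 h2 h3
  subst h1; subst h3
  congr 1
  funext i hi
  exact h2 i hi hi

lemma key {r d m e n f p : ℕ} (σ : Equiv.Perm (Fin p)) (β : VMor r e n f p)
    (α : VMor r d m e n) :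
    permAct σ (β.comp α)
      = (permAct σ β).comp (permAct (Tuple.sort (⇑σ ∘ β.α₁))⁻¹ α) := by
  set s : Equiv.Perm (Fin n) := Tuple.sort (⇑σ ∘ β.α₁) with hs_def
  -- the two sorts agree
  have hginj : Function.Injective (⇑σ ∘ β.α₁ ∘ α.α₁) :=
    σ.injective.comp (β.mono.injective.comp α.mono.injective)
  have hmono : Monotone ((⇑σ ∘ β.α₁ ∘ α.α₁) ∘ ⇑(Tuple.sort (⇑s⁻¹ ∘ α.α₁))) := by
    have h1 : Monotone ((⇑s⁻¹ ∘ α.α₁) ∘ ⇑(Tuple.sort (⇑s⁻¹ ∘ α.α₁))) :=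
      Tuple.monotone_sort _
    have h2 := (permAct σ β).mono.monotone
    have : ((⇑σ ∘ β.α₁ ∘ α.α₁) ∘ ⇑(Tuple.sort (⇑s⁻¹ ∘ α.α₁)))
        = ((⇑σ ∘ β.α₁) ∘ ⇑s) ∘ ((⇑s⁻¹ ∘ α.α₁) ∘ ⇑(Tuple.sort (⇑s⁻¹ ∘ α.α₁))) := by
      funext i; simp
    rw [this]
    exact h2.comp h1
  have hsort : Tuple.sort (⇑s⁻¹ ∘ α.α₁) = Tuple.sort (⇑σ ∘ β.α₁ ∘ α.α₁) :=
    sort_unique hginj hmono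
  refine ext' ?_ ?_ ?_
  · show (⇑σ ∘ β.α₁ ∘ α.α₁) ∘ ⇑(Tuple.sort (⇑σ ∘ (β.α₁ ∘ α.α₁))) = _
    funext i
    show σ (β.α₁ (α.α₁ (Tuple.sort (⇑σ ∘ (β.α₁ ∘ α.α₁)) i)))
      = σ (β.α₁ (s (s⁻¹ (α.α₁ (Tuple.sort (⇑s⁻¹ ∘ α.α₁) i)))))
    rw [Equiv.Perm.apply_inv_self, hsort]
  · intro i hi hi'
    dsimp only [comp, permAct]
    have hfun : ∀ (j j' : Fin n) (hj) (hj'), j = j' → α.α₂ j hj = α.α₂ j' hj' := by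
      rintro j _ hj hj' rfl; rfl
    by_cases h : ∃ i', β.α₁ i' = σ⁻¹ i
    · have h' : ∃ i', ((⇑σ ∘ β.α₁) ∘ ⇑(Tuple.sort (⇑σ ∘ β.α₁))) i' = i :=
        ⟨s⁻¹ h.choose, by
          simp only [Function.comp_apply, ← hs_def, Equiv.Perm.apply_inv_self,
            h.choose_spec]⟩
      rw [dif_pos h]
      refine Eq.trans ?_ (dif_pos h').symm
      have hc : s h'.choose = h.choose := by
        apply β.mono.injective
        apply σ.injective
        have h1 := h'.choose_spec
        simp only [Function.comp_apply, ← hs_def] at h1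
        rw [h1, h.choose_spec, Equiv.Perm.apply_inv_self]
      congr 1
      · exact hfun _ _ _ _ (by rw [inv_inv, hc])
      · exact congrArg β.α₃ hc.symm
    · have h' : ¬ ∃ i', ((⇑σ ∘ β.α₁) ∘ ⇑(Tuple.sort (⇑σ ∘ β.α₁))) i' = i := by
        rintro ⟨j, hj⟩
        exact h ⟨s j, by
          apply σ.injective
          simpa only [Function.comp_apply, ← hs_def, Equiv.Perm.apply_inv_self] using hj⟩
      rw [dif_neg h]
      refine Eq.trans ?_ (dif_neg h').symm
      rfl
  · funext i
    show α.α₃ (Tuple.sort (⇑σ ∘ (β.α₁ ∘ α.α₁)) i)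
        + β.α₃ (α.α₁ (Tuple.sort (⇑σ ∘ (β.α₁ ∘ α.α₁)) i))
      = α.α₃ (Tuple.sort (⇑s⁻¹ ∘ α.α₁) i)
        + β.α₃ (s (s⁻¹ (α.α₁ (Tuple.sort (⇑s⁻¹ ∘ α.α₁) i))))
    rw [hsort, Equiv.Perm.apply_inv_self]

end VMor

lemma mapD_sum {A B C : Type} (f : B → C) (s : A →₀ k) (g : A → k → B →₀ k) :
    Finsupp.mapDomain f (s.sum g) = s.sum fun x c => Finsupp.mapDomain f (g x c) :=
  map_finsuppSum (Finsupp.mapDomain.addMonoidHom f) s g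

/-- The `Σ`-invariant subspaces are closed under composition in `k𝒱_r`:
if `a ∈ k[Hom((d,m),(e,n))]` is `Σ_n`-invariant and `b ∈ k[Hom((e,n),(f,p))]` is
`Σ_p`-invariant, then `b ∘ a` is `Σ_p`-invariant.  Hence the invariant hom spaces define
a `k`-linear subcategory `k𝒱_r^Σ` of `k𝒱_r`. -/
theorem invariants_closed_under_comp (r d m e n f p : ℕ)
    (a : VMor r d m e n →₀ k) (ha : ∀ τ : Equiv.Perm (Fin n), pAct k τ a = a)
    (b : VMor r e n f p →₀ k) (hb : ∀ σ : Equiv.Perm (Fin p), pAct k σ b = b) :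
    ∀ σ : Equiv.Perm (Fin p), pAct k σ (lincomp k b a) = lincomp k b a := by
  intro σ
  rw [pAct, lincomp]
  rw [mapD_sum]
  have step1 : (b.sum fun β cb => Finsupp.mapDomain (VMor.permAct σ)
        (a.sum fun α ca => Finsupp.single (β.comp α) (cb * ca)))
      = b.sum fun β cb => a.sum fun α ca =>
          Finsupp.single ((VMor.permAct σ β).comp
            (VMor.permAct (Tuple.sort (⇑σ ∘ β.α₁))⁻¹ α)) (cb * ca) := by
    refine Finsupp.sum_congr fun β _ => ?_
    rw [mapD_sum]
    refine Finsupp.sum_congr fun α _ => ?_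
    rw [Finsupp.mapDomain_single, VMor.key]
  rw [step1]
  have step2 : ∀ β : VMor r e n f p, ∀ cb : k,
      (a.sum fun α ca => Finsupp.single ((VMor.permAct σ β).comp
        (VMor.permAct (Tuple.sort (⇑σ ∘ β.α₁))⁻¹ α)) (cb * ca))
      = a.sum fun α ca =>
          Finsupp.single ((VMor.permAct σ β).comp α) (cb * ca) := by
    intro β cb
    set τ : Equiv.Perm (Fin n) := (Tuple.sort (⇑σ ∘ β.α₁))⁻¹
    conv_rhs => rw [← ha τ, pAct]
    rw [Finsupp.sum_mapDomain_index]
    · intro α'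
      rw [mul_zero, Finsupp.single_zero]
    · intro α' c1 c2
      rw [mul_add, Finsupp.single_add]
  simp only [step2]
  have h0 : ∀ β' : VMor r e n f p,
      (a.sum fun α ca => Finsupp.single (β'.comp α) ((0:k) * ca)) = 0 :=
    fun β' => Finset.sum_eq_zero fun α _ => by simp
  have hadd : ∀ (β' : VMor r e n f p) (c1 c2 : k),
      (a.sum fun α ca => Finsupp.single (β'.comp α) ((c1 + c2) * ca))
        = (a.sum fun α ca => Finsupp.single (β'.comp α) (c1 * ca))
          + a.sum fun α ca => Finsupp.single (β'.comp α) (c2 * ca) := by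
    intro β' c1 c2
    rw [← Finsupp.sum_add]
    exact Finsupp.sum_congr fun α _ => by rw [add_mul, Finsupp.single_add]
  rw [← Finsupp.sum_mapDomain_index (f := VMor.permAct σ) (s := b)
      (h := fun β' cb => a.sum fun α ca => Finsupp.single (β'.comp α) (cb * ca)) h0 hadd]
  rw [show Finsupp.mapDomain (VMor.permAct σ) b = b from hb σ]
end
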